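/- arXiv:2009.03348 — 4 statements merged into one kernel-verified Lean document; each statement's English description precedes it below -/
import Mathlib

section
/- If a regular uncountable cardinal κ has the 2-stationarity property, then κ is a limit cardinal. -/
open Cardinal Set

/-- `𝒫_κ(X)` : the subsets of `X` of cardinality `< κ`. -/
def Pk (κ : Cardinal.{1}) (X : Set Ordinal) : Set (Set Ordinal) :=
  {a | a ⊆ X ∧ Cardinal.mk ↥a < κ}

/-- `𝒫_κ(λ)` for an ordinal `λ` : subsets of `λ` of cardinality `< κ`. -/
def Pkl (κ : Cardinal.{0}) (l : Ordinal) : Set (Set Ordinal) :=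
  Pk (Cardinal.lift.{1} κ) (Set.Iio l)

/-- `C` is club in `P` : `C ⊆ P`, `C` is cofinal (unbounded) in `P` with respect to `⊆`,
and `C` is closed under unions of nonempty `⊆`-directed subfamilies (that land in `P`). -/
def IsClubIn (P C : Set (Set Ordinal)) : Prop :=
  C ⊆ P ∧ (∀ a ∈ P, ∃ b ∈ C, a ⊆ b) ∧
    ∀ D : Set (Set Ordinal), D ⊆ C → D.Nonempty → DirectedOn (· ⊆ ·) D →
      ⋃₀ D ∈ P → ⋃₀ D ∈ C

/-- `S` is stationary in `P` : `S` meets every club subset of `P`. -/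
def IsStatIn (P S : Set (Set Ordinal)) : Prop :=
  ∀ C, IsClubIn P C → (S ∩ C).Nonempty

/-- the cardinality `|κ ∩ a|` of the intersection of `a` with (the set of ordinals below) `κ`. -/
noncomputable def interCard (κ : Cardinal.{0}) (a : Set Ordinal) : Cardinal.{1} :=
  Cardinal.mk ↥(a ∩ Set.Iio κ.ord)

/-- `S ⊆ 𝒫_κ(λ)` is 2-stationary : for every stationary `T ⊆ 𝒫_κ(λ)` there is `a ∈ S` such
that `|κ ∩ a|` is a regular uncountable cardinal and `T ∩ 𝒫_{κ∩a}(a)` is stationary in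
`𝒫_{κ∩a}(a)`. -/
def TwoStationary (κ : Cardinal.{0}) (l : Ordinal) (S : Set (Set Ordinal)) : Prop :=
  ∀ T ⊆ Pkl κ l, IsStatIn (Pkl κ l) T →
    ∃ a ∈ S, (interCard κ a).IsRegular ∧ Cardinal.aleph0 < interCard κ a ∧
      IsStatIn (Pk (interCard κ a) a) (T ∩ Pk (interCard κ a) a)

/-- `κ` has the 2-stationarity property : `𝒫_κ(λ)` is 2-stationary in itself for all `λ ≥ κ`. -/
def TwoStatProperty (κ : Cardinal.{0}) : Prop :=
  ∀ l : Ordinal, κ.ord ≤ l → TwoStationary κ l (Pkl κ l)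

/-!
If `κ = μ⁺`, the sets in `𝒫_κ(κ)` containing `μ` form a stationary set `T`. Reflecting `T` to some
`𝒫_{κ∩a}(a)` with `a ∈ 𝒫_κ(κ)` produces `b ∈ T` with `|b| < |κ ∩ a| ≤ |a| ≤ μ`, although `μ ⊆ b`.
-/

theorem IsClubIn.refl (P : Set (Set Ordinal)) : IsClubIn P P :=
  ⟨subset_rfl, fun a ha => ⟨a, ha, subset_rfl⟩, fun _ _ _ _ h => h⟩

theorem IsStatIn.inter_nonempty {P S : Set (Set Ordinal)} (hS : IsStatIn P S) :
    (S ∩ P).Nonempty :=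
  hS P (IsClubIn.refl P)

theorem isStatIn_supersets {P : Set (Set Ordinal)} {x : Set Ordinal} (hx : x ∈ P) :
    IsStatIn P {a | x ⊆ a ∧ a ∈ P} := by
  intro C hC
  obtain ⟨b, hbC, hxb⟩ := hC.2.1 x hx
  exact ⟨b, ⟨hxb, hC.1 hbC⟩, hbC⟩

theorem interCard_le_mk (κ : Cardinal.{0}) (a : Set Ordinal.{0}) : interCard κ a ≤ #a :=
  mk_le_mk_of_subset inter_subset_left

theorem TwoStationary.exists_mem_mk_lt_interCard {κ : Cardinal.{0}} {l : Ordinal}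
    {S T : Set (Set Ordinal)} (hS : TwoStationary κ l S) (hTP : T ⊆ Pkl κ l)
    (hT : IsStatIn (Pkl κ l) T) : ∃ a ∈ S, ∃ b ∈ T, #b < interCard κ a := by
  obtain ⟨a, haS, -, -, hstat⟩ := hS T hTP hT
  obtain ⟨b, ⟨hbT, -⟩, hbP⟩ := hstat.inter_nonempty
  exact ⟨a, haS, b, hbT, hbP.2⟩

theorem mk_Iio_ord_lift (μ : Cardinal.{0}) : #(Iio μ.ord) = lift.{1} μ := by
  rw [mk_Iio_ordinal, card_ord]

theorem Iio_ord_mem_Pkl {μ κ : Cardinal.{0}} (h : μ < κ) : Iio μ.ord ∈ Pkl κ κ.ord :=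
  ⟨Iio_subset_Iio (ord_le_ord.2 h.le), (mk_Iio_ord_lift μ).trans_lt (lift_lt.2 h)⟩

theorem not_twoStationary_succ (μ : Cardinal.{0}) :
    ¬ TwoStationary (Order.succ μ) (Order.succ μ).ord (Pkl (Order.succ μ) (Order.succ μ).ord) := by
  intro h2
  have hμ : Iio μ.ord ∈ Pkl (Order.succ μ) (Order.succ μ).ord :=
    Iio_ord_mem_Pkl (Order.lt_succ μ)
  obtain ⟨a, haP, b, ⟨hμb, -⟩, hba⟩ :=
    h2.exists_mem_mk_lt_interCard (fun _ hb => hb.2) (isStatIn_supersets hμ)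
  have hμ_le_b : lift.{1} μ ≤ #b := mk_Iio_ord_lift μ ▸ mk_le_mk_of_subset hμb
  have ha_le_μ : interCard (Order.succ μ) a ≤ lift.{1} μ := by
    have ha := (interCard_le_mk (Order.succ μ) a).trans_lt haP.2
    rwa [lift_succ, Order.lt_succ_iff] at ha
  exact (hμ_le_b.trans_lt hba).not_ge ha_le_μ

theorem twoStatProperty_isLimit_general (κ : Cardinal.{0})
    (hunc : Cardinal.aleph0 < κ)
    (h2 : TwoStatProperty κ) : κ ≠ 0 ∧ Order.IsSuccPrelimit κ := by
  refine ⟨(aleph0_pos.trans hunc).ne', fun μ hμκ => ?_⟩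
  rw [← hμκ.succ_eq] at h2
  exact not_twoStationary_succ μ (h2 _ le_rfl)

/-- If a regular uncountable cardinal `κ` has the 2-stationarity property,
then `κ` is a limit cardinal. -/
theorem twoStatProperty_isLimit (κ : Cardinal.{0})
    (hreg : κ.IsRegular) (hunc : Cardinal.aleph0 < κ)
    (h2 : TwoStatProperty κ) : κ ≠ 0 ∧ Order.IsSuccPrelimit κ :=
  twoStatProperty_isLimit_general κ hunc h2
end

section
/- Suppose κ ≤ λ are regular uncountable cardinals, S ⊆ 𝒫_κ(λ) is 2-stationary and T ⊆ 𝒫_κ(λ) is stationary. Then the set of r ∈ S such that T ∩ 𝒫_{κ∩r}(r) is stationary in 𝒫_{κ∩r}(r) is itself stationary in 𝒫_κ(λ). -/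
open Cardinal Set

/- ### Auxiliary lemmas -/

lemma aux_isRegular_lift {κ : Cardinal.{0}} (h : κ.IsRegular) :
    (Cardinal.lift.{1} κ).IsRegular := by
  constructor
  · simpa using lift_le.{1}.2 h.1
  · rw [← lift_ord, ← Ordinal.lift_cof, h.cof_eq]

lemma aux_mk_union_lt {μ : Cardinal.{1}} (hμ : ℵ₀ ≤ μ) {b c : Set Ordinal}
    (hb : #b < μ) (hc : #c < μ) : #(↥(b ∪ c)) < μ :=
  lt_of_le_of_lt (mk_union_le b c) (Cardinal.add_lt_of_lt hμ hb hc)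

lemma aux_mk_iUnion_lt {v : ℕ → Set Ordinal} {κ : Cardinal.{1}} (hκ : κ.IsRegular)
    (hunc : ℵ₀ < κ) (h : ∀ n, #(v n) < κ) : #(↥(⋃ n, v n)) < κ := by
  have heq : (⋃ n, v n) = ⋃ m : ULift ℕ, v m.down := by
    ext x
    simp only [mem_iUnion]
    exact ⟨fun ⟨n, h⟩ => ⟨⟨n⟩, h⟩, fun ⟨m, h⟩ => ⟨m.down, h⟩⟩
  rw [heq]
  refine lt_of_le_of_lt (mk_iUnion_le _) ?_
  have hι : #(ULift.{1} ℕ) < κ := by simpa using hunc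
  exact Cardinal.mul_lt_of_lt hκ.1 hι (Cardinal.iSup_lt_of_isRegular hκ hι fun m => h m.down)

/-- `Pk μ a` is a club in itself. -/
lemma aux_pk_self_club (μ : Cardinal.{1}) (a : Set Ordinal) :
    IsClubIn (Pk μ a) (Pk μ a) :=
  ⟨subset_rfl, fun b hb => ⟨b, hb, subset_rfl⟩, fun _ _ _ _ h => h⟩

/-- The family of elements of `Pk μ a` containing a fixed small set `s` is club. -/
lemma aux_club_contains (μ : Cardinal.{1}) (a s : Set Ordinal) (hμ : ℵ₀ ≤ μ)
    (hs : s ∈ Pk μ a) : IsClubIn (Pk μ a) {c | c ∈ Pk μ a ∧ s ⊆ c} := by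
  refine ⟨fun c hc => hc.1, ?_, ?_⟩
  · intro b hb
    exact ⟨b ∪ s, ⟨⟨union_subset hb.1 hs.1, aux_mk_union_lt hμ hb.2 hs.2⟩,
      subset_union_right⟩, subset_union_left⟩
  · intro D hD hne _ hU
    obtain ⟨d, hd⟩ := hne
    exact ⟨hU, (hD hd).2.trans (subset_sUnion_of_mem hd)⟩

/-- The intersection of two clubs in `Pkl κ l` is a club. -/
lemma aux_club_inter {κ : Cardinal.{0}} {l : Ordinal} (hκreg : κ.IsRegular)
    (hκunc : ℵ₀ < κ) {C C' : Set (Set Ordinal)}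
    (hC : IsClubIn (Pkl κ l) C) (hC' : IsClubIn (Pkl κ l) C') :
    IsClubIn (Pkl κ l) (C ∩ C') := by
  have hκ' : (Cardinal.lift.{1} κ).IsRegular := aux_isRegular_lift hκreg
  have hκ'unc : ℵ₀ < Cardinal.lift.{1} κ := by simpa using (Cardinal.lift_lt.{0,1}).2 hκunc
  refine ⟨fun c hc => hC.1 hc.1, ?_, ?_⟩
  · intro a ha
    -- total choice functions into C and C'
    have h1 : ∀ x : Set Ordinal, ∃ b, x ∈ Pkl κ l → b ∈ C ∧ x ⊆ b := by
      intro x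
      by_cases hx : x ∈ Pkl κ l
      · obtain ⟨b, hb, hxb⟩ := hC.2.1 x hx
        exact ⟨b, fun _ => ⟨hb, hxb⟩⟩
      · exact ⟨x, fun h => absurd h hx⟩
    have h2 : ∀ x : Set Ordinal, ∃ b, x ∈ Pkl κ l → b ∈ C' ∧ x ⊆ b := by
      intro x
      by_cases hx : x ∈ Pkl κ l
      · obtain ⟨b, hb, hxb⟩ := hC'.2.1 x hx
        exact ⟨b, fun _ => ⟨hb, hxb⟩⟩
      · exact ⟨x, fun h => absurd h hx⟩
    choose f hf using h1
    choose g hg using h2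
    set v : ℕ → Set Ordinal := fun n => Nat.rec a (fun _ p => g (f p)) n with hv
    have hv0 : v 0 = a := rfl
    have hvs : ∀ n, v (n + 1) = g (f (v n)) := fun n => rfl
    have hvP : ∀ n, v n ∈ Pkl κ l := by
      intro n
      induction n with
      | zero => exact ha
      | succ n ih =>
        rw [hvs]
        exact hC'.1 (hg (f (v n)) (hC.1 (hf (v n) ih).1)).1
    have hvf : ∀ n, v n ⊆ f (v n) := fun n => (hf (v n) (hvP n)).2
    have hfC : ∀ n, f (v n) ∈ C := fun n => (hf (v n) (hvP n)).1
    have hfP : ∀ n, f (v n) ∈ Pkl κ l := fun n => hC.1 (hfC n)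
    have hfg : ∀ n, f (v n) ⊆ v (n + 1) := by
      intro n; rw [hvs]; exact (hg (f (v n)) (hfP n)).2
    have hgC' : ∀ n, v (n + 1) ∈ C' := by
      intro n; rw [hvs]; exact (hg (f (v n)) (hfP n)).1
    have hmono : Monotone v := monotone_nat_of_le_succ fun n => (hvf n).trans (hfg n)
    have hfmono : ∀ {m n : ℕ}, m ≤ n → f (v m) ⊆ f (v n) := by
      intro m n hmn
      rcases eq_or_lt_of_le hmn with h | h
      · subst h; exact subset_rfl
      · exact (hfg m).trans ((hmono h).trans (hvf n))
    set U : Set Ordinal := ⋃ n, v n with hU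
    have hUP : U ∈ Pkl κ l := by
      constructor
      · exact iUnion_subset fun n => (hvP n).1
      · exact aux_mk_iUnion_lt hκ' hκ'unc fun n => (hvP n).2
    have hU1 : ⋃₀ (Set.range fun n => f (v n)) = U := by
      rw [sUnion_range]
      apply subset_antisymm
      · exact iUnion_subset fun n => (hfg n).trans (subset_iUnion v (n + 1))
      · exact iUnion_subset fun n => (hvf n).trans (subset_iUnion (fun n => f (v n)) n)
    have hU2 : ⋃₀ (Set.range fun n => v (n + 1)) = U := by
      rw [sUnion_range]
      apply subset_antisymm
      · exact iUnion_subset fun n => subset_iUnion v (n + 1)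
      · exact iUnion_subset fun n => (hmono (Nat.le_succ n)).trans
          (subset_iUnion (fun n => v (n + 1)) n)
    have hUC : U ∈ C := by
      have := hC.2.2 (Set.range fun n => f (v n))
        (by rintro x ⟨n, rfl⟩; exact hfC n) ⟨f (v 0), 0, rfl⟩
        (by rintro x ⟨m, rfl⟩ y ⟨n, rfl⟩
            exact ⟨f (v (max m n)), ⟨max m n, rfl⟩,
              hfmono (le_max_left m n), hfmono (le_max_right m n)⟩)
        (hU1 ▸ hUP)
      rwa [hU1] at this
    have hUC' : U ∈ C' := by
      have := hC'.2.2 (Set.range fun n => v (n + 1))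
        (by rintro x ⟨n, rfl⟩; exact hgC' n) ⟨v 1, 0, rfl⟩
        (by rintro x ⟨m, rfl⟩ y ⟨n, rfl⟩
            exact ⟨v (max m n + 1), ⟨max m n, rfl⟩,
              hmono (Nat.succ_le_succ (le_max_left m n)),
              hmono (Nat.succ_le_succ (le_max_right m n))⟩)
        (hU2 ▸ hUP)
      rwa [hU2] at this
    exact ⟨U, ⟨hUC, hUC'⟩, hv0 ▸ subset_iUnion v 0⟩
  · intro D hD hne hdir hU
    exact ⟨hC.2.2 D (fun x hx => (hD hx).1) hne hdir hU,
      hC'.2.2 D (fun x hx => (hD hx).2) hne hdir hU⟩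

/-- Suppose `κ ≤ λ` are regular uncountable cardinals, `S ⊆ 𝒫_κ(λ)` is 2-stationary and
`T ⊆ 𝒫_κ(λ)` is stationary.  Then the set of `r ∈ S` such that `T ∩ 𝒫_{κ∩r}(r)` is
stationary in `𝒫_{κ∩r}(r)` is itself stationary in `𝒫_κ(λ)`. -/
theorem twoStationary_stationarily_many (κ lc : Cardinal.{0})
    (hκreg : κ.IsRegular) (hκunc : Cardinal.aleph0 < κ)
    (hlreg : lc.IsRegular) (hlunc : Cardinal.aleph0 < lc) (hκl : κ ≤ lc)
    (S T : Set (Set Ordinal))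
    (hS : S ⊆ Pkl κ lc.ord) (hT : T ⊆ Pkl κ lc.ord)
    (h2 : TwoStationary κ lc.ord S)
    (hTstat : IsStatIn (Pkl κ lc.ord) T) :
    IsStatIn (Pkl κ lc.ord)
      {r | r ∈ S ∧ IsStatIn (Pk (interCard κ r) r) (T ∩ Pk (interCard κ r) r)} := by
  intro C hC
  -- `T ∩ C` is stationary
  have hTC : T ∩ C ⊆ Pkl κ lc.ord := fun x hx => hT hx.1
  have hTCstat : IsStatIn (Pkl κ lc.ord) (T ∩ C) := by
    intro C' hC'
    obtain ⟨x, hxT, hxC, hxC'⟩ := hTstat (C ∩ C') (aux_club_inter hκreg hκunc hC hC')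
    exact ⟨x, ⟨hxT, hxC⟩, hxC'⟩
  obtain ⟨a, haS, hreg, hunc, hstat⟩ := h2 (T ∩ C) hTC hTCstat
  set μ := interCard κ a with hμdef
  have hμ0 : ℵ₀ ≤ μ := hunc.le
  set D : Set (Set Ordinal) := (T ∩ C) ∩ Pk μ a with hDdef
  have hDC : D ⊆ C := fun x hx => hx.1.2
  have hDpk : D ⊆ Pk μ a := fun x hx => hx.2
  have hDne : D.Nonempty := by
    obtain ⟨x, hx, _⟩ := hstat (Pk μ a) (aux_pk_self_club μ a)
    exact ⟨x, hx⟩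
  have hdir : DirectedOn (· ⊆ ·) D := by
    intro b hb c hc
    have hbc : b ∪ c ∈ Pk μ a :=
      ⟨union_subset (hb.2).1 (hc.2).1, aux_mk_union_lt hμ0 (hb.2).2 (hc.2).2⟩
    obtain ⟨d, hd, hdmem⟩ := hstat _ (aux_club_contains μ a (b ∪ c) hμ0 hbc)
    exact ⟨d, hd, subset_union_left.trans hdmem.2, subset_union_right.trans hdmem.2⟩
  have hUa : ⋃₀ D = a := by
    apply subset_antisymm
    · exact sUnion_subset fun b hb => (hb.2).1
    · intro x hx
      have hxs : ({x} : Set Ordinal) ∈ Pk μ a := by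
        refine ⟨singleton_subset_iff.2 hx, ?_⟩
        simpa using lt_of_lt_of_le Cardinal.one_lt_aleph0 hμ0
      obtain ⟨d, hd, hdmem⟩ := hstat _ (aux_club_contains μ a {x} hμ0 hxs)
      exact ⟨d, hd, hdmem.2 rfl⟩
  have haP : a ∈ Pkl κ lc.ord := hS haS
  have haC : a ∈ C := by
    have := hC.2.2 D hDC hDne hdir (by rwa [hUa])
    rwa [hUa] at this
  refine ⟨a, ⟨haS, ?_⟩, haC⟩
  intro C₀ hC₀
  obtain ⟨x, hx, hxC₀⟩ := hstat C₀ hC₀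
  exact ⟨x, ⟨hx.1.1, hx.2⟩, hxC₀⟩
end

section
/- Let κ ≤ λ be regular uncountable cardinals and let T = {a ∈ 𝒫_κ(λ) : κ ∩ a ∈ κ}. If r ∈ 𝒫_κ(λ) is such that |κ ∩ r| is regular and T ∩ 𝒫_{κ∩r}(r) is stationary in 𝒫_{κ∩r}(r), then κ ∩ r is an ordinal (i.e., κ ∩ r ∈ κ) and κ ∩ r is a regular cardinal. -/
open Cardinal Set

/-- Let `κ ≤ λ` be regular uncountable cardinals and `T = {a ∈ 𝒫_κ(λ) : κ ∩ a ∈ κ}`.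
If `r ∈ 𝒫_κ(λ)` is such that `|κ ∩ r|` is regular and `T ∩ 𝒫_{κ∩r}(r)` is stationary
in `𝒫_{κ∩r}(r)`, then `κ ∩ r` is an ordinal `β ∈ κ`, and `κ ∩ r` is a regular cardinal. -/
theorem trace_inter_regular_cardinal (κ lc : Cardinal.{0})
    (hκreg : κ.IsRegular) (hκunc : Cardinal.aleph0 < κ)
    (hlreg : lc.IsRegular) (hlunc : Cardinal.aleph0 < lc) (hκl : κ ≤ lc)
    (r : Set Ordinal) (hr : r ∈ Pkl κ lc.ord)
    (hreg' : (interCard κ r).IsRegular)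
    (hstat : IsStatIn (Pk (interCard κ r) r)
      ({a | a ∈ Pkl κ lc.ord ∧ ∃ β < κ.ord, a ∩ Set.Iio κ.ord = Set.Iio β}
        ∩ Pk (interCard κ r) r)) :
    ∃ β < κ.ord, r ∩ Set.Iio κ.ord = Set.Iio β ∧
      ∃ μ : Cardinal.{0}, μ.IsRegular ∧ μ.ord = β := by
  obtain ⟨hrsub, hrcard⟩ : r ⊆ Set.Iio lc.ord ∧ Cardinal.mk ↥r < Cardinal.lift.{1} κ := hr
  set μ := interCard κ r with hμ
  -- key lemma
  have key : ∀ x ∈ r ∩ Set.Iio κ.ord, ∃ γ, x < γ ∧ γ < κ.ord ∧ Set.Iio γ ⊆ r ∧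
      Cardinal.lift.{1} γ.card < μ := by
    rintro x ⟨hxr, hxκ⟩
    have hclub : IsClubIn (Pk μ r) {b | (b ⊆ r ∧ Cardinal.mk ↥b < μ) ∧ x ∈ b} := by
      refine ⟨fun b hb => hb.1, ?_, ?_⟩
      · intro a ha
        refine ⟨a ∪ {x}, ⟨⟨?_, ?_⟩, Or.inr rfl⟩, subset_union_left⟩
        · exact union_subset ha.1 (singleton_subset_iff.2 hxr)
        · refine lt_of_le_of_lt (mk_union_le _ _) ?_
          rw [mk_singleton]
          exact Cardinal.add_lt_of_lt hreg'.1 ha.2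
            (lt_of_lt_of_le Cardinal.one_lt_aleph0 hreg'.1)
      · rintro D hD ⟨b, hb⟩ _ hP
        exact ⟨hP, ⟨b, hb, (hD hb).2⟩⟩
    obtain ⟨a, ⟨⟨_, β, hβκ, hβ⟩, _⟩, ⟨har, hacard⟩, hxa⟩ := hstat _ hclub
    have hxβ : x < β := by
      have : x ∈ a ∩ Set.Iio κ.ord := ⟨hxa, hxκ⟩
      rwa [hβ] at this
    refine ⟨β, hxβ, hβκ, ?_, ?_⟩
    · rw [← hβ]; exact (inter_subset_left).trans har
    · rw [← Ordinal.mk_Iio_ordinal, ← hβ]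
      exact lt_of_le_of_lt (mk_le_mk_of_subset inter_subset_left) hacard
  -- downward closedness
  have hdc : ∀ x ∈ r ∩ Set.Iio κ.ord, ∀ y < x, y ∈ r ∩ Set.Iio κ.ord := by
    intro x hx y hyx
    obtain ⟨γ, hxγ, _, hIio, _⟩ := key x hx
    exact ⟨hIio (hyx.trans hxγ), hyx.trans hx.2⟩
  -- the least ordinal not in K
  have hne : {β : Ordinal | β ∉ r ∩ Set.Iio κ.ord}.Nonempty :=
    ⟨κ.ord, fun h => absurd h.2 (lt_irrefl κ.ord)⟩
  set β₀ := sInf {β : Ordinal | β ∉ r ∩ Set.Iio κ.ord} with hβ₀def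
  have hβ₀notin : β₀ ∉ r ∩ Set.Iio κ.ord := csInf_mem hne
  have hK : r ∩ Set.Iio κ.ord = Set.Iio β₀ := by
    ext z
    constructor
    · intro hz
      by_contra h
      rw [Set.mem_Iio, not_lt] at h
      rcases eq_or_lt_of_le h with h' | h'
      · exact hβ₀notin (h' ▸ hz)
      · exact hβ₀notin (hdc z hz β₀ h')
    · intro hz
      by_contra h
      exact absurd (Set.mem_Iio.1 hz) (not_lt.2 (csInf_le' h))
  have hμcard : μ = Cardinal.lift.{1} β₀.card := by
    rw [hμ, interCard, hK, Ordinal.mk_Iio_ordinal]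
  have hβ₀κ : β₀ < κ.ord := by
    rw [Cardinal.lt_ord, ← Cardinal.lift_lt.{0,1}]
    calc Cardinal.lift.{1} β₀.card = μ := hμcard.symm
      _ ≤ Cardinal.mk ↥r := mk_le_mk_of_subset inter_subset_left
      _ < Cardinal.lift.{1} κ := hrcard
  -- regularity of β₀.card
  rw [hμcard] at hreg'
  have hregc : β₀.card.IsRegular := by
    refine ⟨Cardinal.aleph0_le_lift.1 hreg'.1, ?_⟩
    have h2 := hreg'.2
    rw [← Cardinal.lift_ord, ← Ordinal.lift_cof, Cardinal.lift_le] at h2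
    exact h2
  -- β₀ is an initial ordinal
  have hord : β₀.card.ord = β₀ := by
    rcases eq_or_lt_of_le (Cardinal.ord_card_le β₀) with h | h
    · exact h
    · exfalso
      have hδ : β₀.card.ord ∈ r ∩ Set.Iio κ.ord := by rw [hK]; exact h
      obtain ⟨γ, hδγ, _, _, hγcard⟩ := key _ hδ
      rw [hμcard, Cardinal.lift_lt] at hγcard
      exact absurd (Cardinal.lt_ord.2 hγcard) (not_lt.2 hδγ.le)
  exact ⟨β₀, hβ₀κ, hK, β₀.card, hregc, hord⟩
end

section
/- Suppose κ is regular, κ < λ, and ℙ is a separative atomless κ-closed poset of cardinality λ which forces the existence of a surjection from κ onto λ. Then the Boolean completion of ℙ is isomorphic to the Boolean completion of the Levy collapse Col(κ,{λ}), i.e., ℙ is forcing equivalent to the poset of partial functions from κ to λ of size < κ. -/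
open Cardinal

universe u v

/-- `e : P → R` is a dense embedding of forcing notions: it preserves order and
compatibility, and its image is dense in `R`. -/
def DenseEmb {P : Type u} {R : Type v} [Preorder P] [Preorder R] (e : P → R) : Prop :=
  (∀ p q : P, p ≤ q → e p ≤ e q) ∧
  (∀ p q : P, (∃ r, r ≤ p ∧ r ≤ q) ↔ (∃ s, s ≤ e p ∧ s ≤ e q)) ∧
  ∀ r : R, ∃ p : P, e p ≤ r

/-- Two forcing notions are forcing equivalent (have isomorphic Boolean completions
`ro(P) ≅ ro(Q)`) iff they both embed densely into a common forcing notion. -/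
def ForcingEquiv (P : Type u) (Q : Type v) [Preorder P] [Preorder Q] : Prop :=
  ∃ (R : Type (max u v)) (pr : Preorder R) (e₁ : P → R) (e₂ : Q → R),
    @DenseEmb P R _ pr e₁ ∧ @DenseEmb Q R _ pr e₂

/-- `e : P → R` is a complete embedding of forcing notions: it preserves order and
compatibility, and every `r ∈ R` has a reduction in `P`. -/
def CompleteEmb {P : Type u} {R : Type v} [Preorder P] [Preorder R] (e : P → R) : Prop :=
  (∀ p q : P, p ≤ q → e p ≤ e q) ∧
  (∀ p q : P, (∃ r, r ≤ p ∧ r ≤ q) ↔ (∃ s, s ≤ e p ∧ s ≤ e q)) ∧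
  ∀ r : R, ∃ p : P, ∀ p' : P, p' ≤ p → ∃ s, s ≤ e p' ∧ s ≤ r

/-- `P` is `κ`-closed: every descending sequence of length `< κ` has a lower bound. -/
def KClosed (P : Type u) [Preorder P] (κ : Cardinal.{0}) : Prop :=
  ∀ o : Ordinal, o < κ.ord → ∀ f : Ordinal → P,
    (∀ α β : Ordinal, α ≤ β → β < o → f β ≤ f α) → ∃ b : P, ∀ α < o, b ≤ f α

/-- `P` is separative. -/
def Separative (P : Type u) [Preorder P] : Prop :=
  ∀ p q : P, ¬ p ≤ q → ∃ r, r ≤ p ∧ ¬∃ s, s ≤ r ∧ s ≤ q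

/-- `P` is atomless. -/
def Atomless (P : Type u) [Preorder P] : Prop :=
  ∀ p : P, ∃ q r, q ≤ p ∧ r ≤ p ∧ ¬∃ s, s ≤ q ∧ s ≤ r

/-- `Col(κ,{λ})`: partial functions `κ ⇀ λ` of size `< κ`, as functional sets of pairs of
ordinals, ordered by reverse inclusion. -/
def Col (κ l : Cardinal.{0}) : Type 1 :=
  {f : Set (Ordinal × Ordinal) //
    (∀ p ∈ f, p.1 < κ.ord ∧ p.2 < l.ord) ∧
    (∀ p ∈ f, ∀ q ∈ f, p.1 = q.1 → p.2 = q.2) ∧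
    Cardinal.mk ↥f < Cardinal.lift.{1} κ}

instance (κ l : Cardinal.{0}) : Preorder (Col κ l) where
  le f g := g.1 ⊆ f.1
  le_refl f := Set.Subset.rfl
  le_trans f g h h₁ h₂ := fun x hx => h₁ (h₂ hx)

/-- The Levy collapse `Col(κ,λ)`: partial functions `p : λ × κ ⇀ λ` with `|dom p| < κ` and
`p(α,ξ) ∈ α`, ordered by reverse inclusion. -/
def Levy (κ l : Cardinal.{0}) : Type 1 :=
  {f : Set ((Ordinal × Ordinal) × Ordinal) //
    (∀ p ∈ f, p.1.1 < l.ord ∧ p.1.2 < κ.ord ∧ p.2 < p.1.1) ∧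
    (∀ p ∈ f, ∀ q ∈ f, p.1 = q.1 → p.2 = q.2) ∧
    Cardinal.mk ↥f < Cardinal.lift.{1} κ}

instance (κ l : Cardinal.{0}) : Preorder (Levy κ l) where
  le f g := g.1 ⊆ f.1
  le_refl f := Set.Subset.rfl
  le_trans f g h h₁ h₂ := fun x hx => h₁ (h₂ hx)

/-!
Both `ℙ` and `Col(κ,{λ})` embed densely into the nonempty regular open sets of `ℙ`. Enumerate `ℙ`
as `(enum ξ)_{ξ<λ}` and build inside `ℙ` a tree of height `κ` in which every node is split by a
maximal antichain of size `λ`, each piece below a node at level `γ` deciding the value `ξ` of `ǧ(γ)`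
and whether `enum ξ` is in the generic filter. Such antichains exist because `ǧ` takes `λ` values
below every condition, which yields antichains of size `λ` there; `κ`-closure keeps the nodes
nonempty and the levels dense. A condition `f` of the collapse goes to the union of the nodes whose
branch extends `f`. Each `enum ξ` contains such a node: some `q ≤ enum ξ` forces `ǧ(α) = ξ`, and a
piece at level `α` meeting `q` decides `enum ξ` positively.
-/

open Set

namespace CollapseAbsorption

section Order

variable {P : Type u} [Preorder P]

def Compat (p q : P) : Prop := ∃ r, r ≤ p ∧ r ≤ q

theorem Compat.symm {p q : P} (h : Compat p q) : Compat q p :=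
  let ⟨r, hp, hq⟩ := h; ⟨r, hq, hp⟩

theorem Compat.mono {p p' q q' : P} (h : Compat p q) (hp : p ≤ p') (hq : q ≤ q') : Compat p' q' :=
  let ⟨r, hrp, hrq⟩ := h; ⟨r, hrp.trans hp, hrq.trans hq⟩

/-- Interior of the closure of `U` in the topology whose open sets are the lower sets. -/
def regularization (U : Set P) : Set P := {p | ∀ q ≤ p, ∃ r ≤ q, r ∈ U}

theorem regularization_mono {U V : Set P} (h : U ⊆ V) : regularization U ⊆ regularization V :=
  fun _ hp q hq => let ⟨r, hrq, hr⟩ := hp q hq; ⟨r, hrq, h hr⟩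

theorem isLowerSet_regularization (U : Set P) : IsLowerSet (regularization U) :=
  fun _ _ hqp hp r hr => hp r (hr.trans hqp)

theorem subset_regularization {U : Set P} (hU : IsLowerSet U) : U ⊆ regularization U :=
  fun _ hp q hq => ⟨q, le_rfl, hU hq hp⟩

theorem regularization_regularization (U : Set P) :
    regularization (regularization U) = regularization U := by
  refine (subset_regularization (isLowerSet_regularization U)).antisymm' fun p hp q hq => ?_
  obtain ⟨r, hrq, hr⟩ := hp q hq
  obtain ⟨r', hr'r, hr'⟩ := hr r le_rfl
  exact ⟨r', hr'r.trans hrq, hr'⟩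

theorem regularization_Iic (hsep : Separative P) (a : P) : regularization (Iic a) = Iic a := by
  refine Subset.antisymm (fun p hp => ?_) (subset_regularization (isLowerSet_Iic a))
  by_contra hpa
  obtain ⟨r, hrp, hr⟩ := hsep p a hpa
  obtain ⟨r', hr'r, hr'a⟩ := hp r hrp
  exact hr ⟨r', hr'r, hr'a⟩

/-- `ro(P)⁺`, as the nonempty regular open sets. -/
def RegOpen (P : Type u) [Preorder P] : Type u :=
  {S : Set P // S.Nonempty ∧ regularization S = S}

instance : Preorder (RegOpen P) := Preorder.lift Subtype.val

theorem RegOpen.isLowerSet (S : RegOpen P) : IsLowerSet S.1 :=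
  S.2.2 ▸ isLowerSet_regularization S.1

def RegOpen.Iic (hsep : Separative P) (p : P) : RegOpen P :=
  ⟨Set.Iic p, nonempty_Iic, regularization_Iic hsep p⟩

def RegOpen.ofLowerSet (U : Set P) (hU : IsLowerSet U) (hne : U.Nonempty) : RegOpen P :=
  ⟨regularization U, hne.mono (subset_regularization hU), regularization_regularization U⟩

theorem denseEmb_regOpenIic (hsep : Separative P) : DenseEmb (RegOpen.Iic hsep) := by
  refine ⟨fun p q hpq x hx => le_trans hx hpq, fun p q => ⟨?_, ?_⟩, ?_⟩
  · rintro ⟨r, hrp, hrq⟩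
    exact ⟨RegOpen.Iic hsep r, fun x hx => le_trans hx hrp, fun x hx => le_trans hx hrq⟩
  · rintro ⟨S, hSp, hSq⟩
    obtain ⟨x, hx⟩ := S.2.1
    exact ⟨x, hSp hx, hSq hx⟩
  · intro S
    obtain ⟨x, hx⟩ := S.2.1
    exact ⟨x, fun y hy => RegOpen.isLowerSet S hy hx⟩

theorem denseEmb_regularization {Q : Type*} [Preorder Q] (hsep : Separative P) (F : Q → Set P)
    (hlower : ∀ q, IsLowerSet (F q)) (hne : ∀ q, (F q).Nonempty) (hmono : Monotone F)
    (hcompat : ∀ q q', (F q ∩ F q').Nonempty → Compat q q') (hdense : ∀ p, ∃ q, F q ⊆ Iic p) :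
    DenseEmb fun q => RegOpen.ofLowerSet (F q) (hlower q) (hne q) := by
  refine ⟨fun q q' h => regularization_mono (hmono h), fun q q' => ⟨?_, ?_⟩, fun S => ?_⟩
  · rintro ⟨r, hrq, hrq'⟩
    exact ⟨RegOpen.ofLowerSet (F r) (hlower r) (hne r), regularization_mono (hmono hrq),
      regularization_mono (hmono hrq')⟩
  · rintro ⟨S, hSq, hSq'⟩
    obtain ⟨x, hx⟩ := S.2.1
    obtain ⟨r, hrx, hr⟩ := hSq hx x le_rfl
    obtain ⟨r', hr'r, hr'⟩ := isLowerSet_regularization _ hrx (hSq' hx) r le_rfl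
    exact hcompat q q' ⟨r', hlower q hr'r hr, hr'⟩
  · obtain ⟨x, hx⟩ := S.2.1
    obtain ⟨q, hq⟩ := hdense x
    refine ⟨q, fun y hy => ?_⟩
    have : y ∈ Iic x := regularization_Iic hsep x ▸ regularization_mono hq hy
    exact RegOpen.isLowerSet S this hx

theorem forcingEquiv_of_lowerSets {Q : Type u} [Preorder Q] (hsep : Separative P) (F : Q → Set P)
    (hlower : ∀ q, IsLowerSet (F q)) (hne : ∀ q, (F q).Nonempty) (hmono : Monotone F)
    (hcompat : ∀ q q', (F q ∩ F q').Nonempty → Compat q q') (hdense : ∀ p, ∃ q, F q ⊆ Iic p) :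
    ForcingEquiv P Q :=
  ⟨RegOpen P, inferInstance, _, _, denseEmb_regOpenIic hsep,
    denseEmb_regularization hsep F hlower hne hmono hcompat hdense⟩

end Order

section Closed

variable {P : Type u} [Preorder P] {κ : Cardinal.{0}}

open Classical in
noncomputable def descendingSeq (d : Ordinal → P → P) (x : P) : Ordinal → P
  | δ => if h : ∃ b, b ≤ x ∧ ∀ δ' < δ, b ≤ d δ' (descendingSeq d x δ') then h.choose else x
termination_by δ => δ

theorem descendingSeq_spec (hclosed : KClosed P κ) {d : Ordinal → P → P} (hd : ∀ δ y, d δ y ≤ y)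
    (x : P) {δ : Ordinal} (hδ : δ < κ.ord) :
    descendingSeq d x δ ≤ x ∧ ∀ δ' < δ, descendingSeq d x δ ≤ d δ' (descendingSeq d x δ') := by
  induction δ using WellFoundedLT.induction with
  | _ δ ih =>
  suffices h : ∃ b, b ≤ x ∧ ∀ δ' < δ, b ≤ d δ' (descendingSeq d x δ') by
    rw [descendingSeq, dif_pos h]
    exact h.choose_spec
  rcases eq_or_ne δ 0 with rfl | hδ0
  · exact ⟨x, le_rfl, fun δ' h => absurd h not_lt_zero⟩
  have hanti : ∀ α β, α ≤ β → β < δ →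
      d β (descendingSeq d x β) ≤ d α (descendingSeq d x α) := by
    intro α β hαβ hβ
    rcases hαβ.eq_or_lt with rfl | hαβ
    · exact le_rfl
    · exact (hd _ _).trans ((ih β hβ (hβ.trans hδ)).2 α hαβ)
  obtain ⟨b, hb⟩ := hclosed δ hδ _ hanti
  have hpos := pos_iff_ne_zero.2 hδ0
  exact ⟨b, (hb 0 hpos).trans ((hd _ _).trans (ih 0 hpos (hpos.trans hδ)).1), hb⟩

/-- `κ`-closed posets are `κ`-distributive. -/
theorem KClosed.exists_le_forall_mem (hclosed : KClosed P κ) {o : Ordinal} (ho : o < κ.ord)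
    {D : Ordinal → Set P} (hlower : ∀ δ < o, IsLowerSet (D δ))
    (hdense : ∀ δ < o, ∀ x, ∃ y ≤ x, y ∈ D δ) (x : P) : ∃ y ≤ x, ∀ δ < o, y ∈ D δ := by
  have hd : ∀ δ y, ∃ z ≤ y, δ < o → z ∈ D δ := fun δ y =>
    if hδ : δ < o then (hdense δ hδ y).imp fun _ h => ⟨h.1, fun _ => h.2⟩
    else ⟨y, le_rfl, fun h => absurd h hδ⟩
  choose d hdle hdD using hd
  obtain ⟨hx, hle⟩ := descendingSeq_spec hclosed hdle x ho
  exact ⟨_, hx, fun δ hδ => hlower δ hδ (hle δ hδ) (hdD _ _ hδ)⟩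

end Closed

section Tree

variable {P : Type u} [Preorder P]

/-- The node at level `γ` of the branch `s` through the tree whose nodes `A` splits. -/
noncomputable def node (A : Set P → Ordinal → Ordinal → P) (s : Ordinal → Ordinal) :
    Ordinal → Set P
  | γ => {x | ∀ δ (_ : δ < γ), x ≤ A (node A s δ) δ (s δ)}
termination_by γ => γ

variable {A : Set P → Ordinal → Ordinal → P} {s s' : Ordinal → Ordinal} {γ : Ordinal} {x : P}

theorem mem_node : x ∈ node A s γ ↔ ∀ δ < γ, x ≤ A (node A s δ) δ (s δ) := by
  rw [node]; rfl

theorem node_anti {δ : Ordinal} (h : δ ≤ γ) : node A s γ ⊆ node A s δ :=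
  fun _ hx => mem_node.2 fun δ' hδ' => mem_node.1 hx δ' (hδ'.trans_le h)

theorem isLowerSet_node : IsLowerSet (node A s γ) :=
  fun _ _ hyx hx => mem_node.2 fun δ hδ => hyx.trans (mem_node.1 hx δ hδ)

theorem mem_node_succ :
    x ∈ node A s (Order.succ γ) ↔ x ∈ node A s γ ∧ x ≤ A (node A s γ) γ (s γ) := by
  simp only [mem_node, Order.lt_succ_iff, le_iff_lt_or_eq, or_imp, forall_and, forall_eq]

theorem node_congr (h : EqOn s s' (Iio γ)) : node A s γ = node A s' γ := by
  induction γ using WellFoundedLT.induction with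
  | _ γ ih =>
  ext x
  simp only [mem_node]
  refine forall₂_congr fun δ hδ => ?_
  rw [ih δ hδ fun ξ hξ => h (lt_trans hξ hδ), h hδ]

def IsPartition (l : Cardinal.{0}) (S : Set P) (a : Ordinal → P) : Prop :=
  (∀ β, a β ∈ S) ∧ (Iio l.ord).Pairwise (fun β β' => ¬Compat (a β) (a β')) ∧
    ∀ q ∈ S, ∃ β < l.ord, Compat q (a β)

def IsSplitting (κ l : Cardinal.{0}) (A : Set P → Ordinal → Ordinal → P) : Prop :=
  ∀ S : Set P, S.Nonempty → IsLowerSet S → ∀ γ < κ.ord, IsPartition l S (A S γ)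

variable {κ l : Cardinal.{0}}

theorem node_nonempty (hA : IsSplitting κ l A) (hclosed : KClosed P κ) (s : Ordinal → Ordinal)
    (hγ : γ < κ.ord) : (node A s γ).Nonempty := by
  induction γ using WellFoundedLT.induction with
  | _ γ ih =>
  have hmem : ∀ δ < γ, A (node A s δ) δ (s δ) ∈ node A s δ := fun δ hδ =>
    (hA _ (ih δ hδ (hδ.trans hγ)) isLowerSet_node δ (hδ.trans hγ)).1 (s δ)
  have hanti : ∀ α β, α ≤ β → β < γ →
      A (node A s β) β (s β) ≤ A (node A s α) α (s α) := by
    intro α β hαβ hβ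
    rcases hαβ.eq_or_lt with rfl | hαβ
    · exact le_rfl
    · exact mem_node.1 (hmem β hβ) α hαβ
  obtain ⟨b, hb⟩ := hclosed γ hγ _ hanti
  exact ⟨b, mem_node.2 hb⟩

theorem eqOn_of_mem_node (hA : IsSplitting κ l A) (hγ : γ < κ.ord)
    (hs : MapsTo s (Iio γ) (Iio l.ord)) (hs' : MapsTo s' (Iio γ) (Iio l.ord))
    (hx : x ∈ node A s γ) (hx' : x ∈ node A s' γ) : EqOn s s' (Iio γ) := by
  intro δ hδ
  induction δ using WellFoundedLT.induction with
  | _ δ ih =>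
  have hnode : node A s δ = node A s' δ :=
    node_congr fun ξ hξ => ih ξ hξ (mem_Iio.2 (lt_trans hξ hδ))
  have hδκ : δ < κ.ord := lt_trans hδ hγ
  have hsplit := hA _ ⟨x, node_anti hδ.le hx⟩ isLowerSet_node δ hδκ
  by_contra hne
  refine hsplit.2.1 (hs hδ) (hs' hδ) hne ⟨x, mem_node.1 hx δ hδ, ?_⟩
  rw [hnode]
  exact mem_node.1 hx' δ hδ

theorem exists_mem_node_succ (hA : IsSplitting κ l A) (hγ : γ < κ.ord) (hx : x ∈ node A s γ) :
    ∃ β < l.ord, ∃ y ≤ x, y ∈ node A (Function.update s γ β) (Order.succ γ) := by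
  obtain ⟨β, hβ, y, hyx, hy⟩ := (hA _ ⟨x, hx⟩ isLowerSet_node γ hγ).2.2 x hx
  have hnode : node A (Function.update s γ β) γ = node A s γ :=
    node_congr fun ξ hξ => Function.update_of_ne (ne_of_lt hξ) _ _
  refine ⟨β, hβ, y, hyx, mem_node_succ.2 ⟨?_, ?_⟩⟩
  · rw [hnode]
    exact isLowerSet_node hyx hx
  · rwa [hnode, Function.update_self]

theorem exists_mem_node_of_forall_lt (hA : IsSplitting κ l A) (hγ : γ < κ.ord)
    (h : ∀ δ < γ, ∃ t, MapsTo t (Iio (Order.succ δ)) (Iio l.ord) ∧ x ∈ node A t (Order.succ δ)) :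
    ∃ s, MapsTo s (Iio γ) (Iio l.ord) ∧ x ∈ node A s γ := by
  choose t ht hxt using h
  let s ξ := if h : ξ < γ then t ξ h ξ else 0
  have hst : ∀ δ (hδ : δ < γ), EqOn s (t δ hδ) (Iio (Order.succ δ)) := by
    intro δ hδ ξ (hξ : ξ < Order.succ δ)
    have hξγ : ξ < γ := (Order.lt_succ_iff.1 hξ).trans_lt hδ
    have hξδ : Order.succ ξ ≤ Order.succ δ := Order.succ_le_of_lt hξ
    simp only [s, dif_pos hξγ]
    exact eqOn_of_mem_node hA ((Order.succ_le_of_lt hξγ).trans_lt hγ) (ht ξ hξγ)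
      ((ht δ hδ).mono_left (Iio_subset_Iio hξδ)) (hxt ξ hξγ) (node_anti hξδ (hxt δ hδ))
      (Order.lt_succ ξ)
  refine ⟨s, fun ξ hξ => ?_, mem_node.2 fun δ hδ => ?_⟩
  · rw [hst ξ hξ (Order.lt_succ ξ)]
    exact ht ξ hξ (Order.lt_succ ξ)
  · have hx : x ∈ node A s (Order.succ δ) := (node_congr (A := A) (hst δ hδ)).symm ▸ hxt δ hδ
    exact (mem_node_succ.1 hx).2

theorem exists_mem_node (hA : IsSplitting κ l A) (hclosed : KClosed P κ) (hγ : γ < κ.ord)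
    (x : P) : ∃ s, MapsTo s (Iio γ) (Iio l.ord) ∧ ∃ y ≤ x, y ∈ node A s γ := by
  induction γ using WellFoundedLT.induction generalizing x with
  | _ γ ih =>
  let D δ := {y | ∃ s, MapsTo s (Iio (Order.succ δ)) (Iio l.ord) ∧ y ∈ node A s (Order.succ δ)}
  have hlower : ∀ δ < γ, IsLowerSet (D δ) := fun δ _ y z hzy ⟨s, hs, hy⟩ =>
    ⟨s, hs, isLowerSet_node hzy hy⟩
  have hdense : ∀ δ < γ, ∀ x, ∃ y ≤ x, y ∈ D δ := by
    intro δ hδ x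
    obtain ⟨s, hs, y, hyx, hy⟩ := ih δ hδ (hδ.trans hγ) x
    obtain ⟨β, hβ, z, hzy, hz⟩ := exists_mem_node_succ hA (hδ.trans hγ) hy
    refine ⟨z, hzy.trans hyx, Function.update s δ β, fun ξ (hξ : ξ < Order.succ δ) => ?_, hz⟩
    rcases (Order.lt_succ_iff.1 hξ).eq_or_lt with rfl | hξ
    · simpa using hβ
    · simpa [Function.update_of_ne hξ.ne] using hs hξ
  obtain ⟨y, hyx, hy⟩ := KClosed.exists_le_forall_mem hclosed hγ hlower hdense x
  obtain ⟨s, hs, hys⟩ := exists_mem_node_of_forall_lt hA hγ hy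
  exact ⟨s, hs, y, hyx, hys⟩

end Tree

section Antichain

variable {P : Type u} [Preorder P]

instance : Std.Symm (Compat (P := P)) := ⟨fun _ _ => Compat.symm⟩

theorem exists_maximal_antichain {D M₀ : Set P} (hM₀D : M₀ ⊆ D) (hM₀ : IsAntichain Compat M₀) :
    ∃ M, M₀ ⊆ M ∧ M ⊆ D ∧ IsAntichain Compat M ∧ ∀ d ∈ D, ∃ m ∈ M, Compat d m := by
  obtain ⟨M, hM₀M, hM⟩ := zorn_subset_nonempty {M | M ⊆ D ∧ IsAntichain Compat M}
    (fun c hc hchain _ => ⟨⋃₀ c, ⟨sUnion_subset fun M hM => (hc hM).1,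
      hchain.pairwise_sUnion.2 fun M hM => (hc hM).2⟩, fun _ => subset_sUnion_of_mem⟩)
    M₀ ⟨hM₀D, hM₀⟩
  refine ⟨M, hM₀M, hM.prop.1, hM.prop.2, fun d hd => ?_⟩
  by_contra! hinc
  have hdM : M = insert d M := hM.eq_of_subset ⟨insert_subset hd hM.prop.1,
    hM.prop.2.insert_of_symm fun m hm _ => hinc m hm⟩ (subset_insert d M)
  exact hinc d (hdM ▸ mem_insert d M : d ∈ M) ⟨d, le_rfl, le_rfl⟩

/-- Read `h q x` as `q ⊩ ẋ = x` for a name `ẋ`: conditions forcing distinct values are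
incompatible. -/
theorem exists_antichain_card_forced {X : Type u} (h : P → X → Prop)
    (hmono : ∀ {p q : P} {x : X}, q ≤ p → h p x → h q x) (hfun : ∀ p x y, h p x → h p y → x = y)
    (x₀ : P) : ∃ W ⊆ Iic x₀, IsAntichain Compat W ∧ #{x | ∃ q ≤ x₀, h q x} ≤ #W := by
  choose c hcx hc using fun x : {x | ∃ q ≤ x₀, h q x} => x.2
  have hinj : Function.Injective c := fun x y hxy =>
    Subtype.ext (hfun (c x) x y (hc x) (hxy ▸ hc y))
  refine ⟨range c, range_subset_iff.2 hcx, ?_, (mk_range_eq c hinj).ge⟩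
  rintro _ ⟨x, rfl⟩ _ ⟨y, rfl⟩ hne ⟨r, hrx, hry⟩
  exact hne (congrArg c (Subtype.ext (hfun r x y (hmono hrx (hc x)) (hmono hry (hc y)))))

theorem isAntichain_iUnion_of_subset_Iic {ι : Type*} {b : ι → P}
    (hb : Pairwise fun i j => ¬Compat (b i) (b j)) {W : ι → Set P} (hWb : ∀ i, W i ⊆ Iic (b i))
    (hW : ∀ i, IsAntichain Compat (W i)) : IsAntichain Compat (⋃ i, W i) := by
  simp only [IsAntichain, Set.Pairwise, mem_iUnion]
  rintro x ⟨i, hx⟩ y ⟨j, hy⟩ hxy hc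
  rcases eq_or_ne i j with rfl | hij
  · exact hW i hx hy hxy hc
  · exact hb hij (hc.mono (hWb i hx) (hWb j hy))

theorem exists_enum_of_mk_eq {α : Type (u + 1)} {M : Set α} {l : Cardinal.{u}}
    (hM : #M = lift.{u + 1} l) (hl : l ≠ 0) :
    ∃ e : Ordinal.{u} → α, (∀ β, e β ∈ M) ∧ InjOn e (Iio l.ord) ∧ M ⊆ e '' Iio l.ord := by
  obtain ⟨E⟩ := Cardinal.eq.1 (show #(Iio l.ord) = #M by rw [mk_Iio_ordinal, card_ord, hM])
  have hl : (0 : Ordinal) < l.ord := ord_pos.2 (pos_iff_ne_zero.2 hl)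
  let e β := if h : β < l.ord then (E ⟨β, h⟩ : α) else E ⟨0, hl⟩
  have he : ∀ β (h : β < l.ord), e β = E ⟨β, h⟩ := fun β h => dif_pos h
  refine ⟨e, fun β => ?_, fun β hβ β' hβ' h => ?_, fun x hx => ?_⟩
  · by_cases h : β < l.ord
    · exact he β h ▸ (E _).2
    · simp only [e, dif_neg h]
      exact (E _).2
  · rw [he β hβ, he β' hβ'] at h
    exact congrArg Subtype.val (E.injective (Subtype.ext h))
  · refine ⟨E.symm ⟨x, hx⟩, (E.symm ⟨x, hx⟩).2, ?_⟩
    rw [he _ (E.symm ⟨x, hx⟩).2]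
    simp

end Antichain

section Name

variable {P : Type 1} [Preorder P] {κ l : Cardinal.{0}} {g : P → Ordinal → Ordinal → Prop}

def forcedValues (g : P → Ordinal → Ordinal → Prop) (x : P) (α : Ordinal) : Set Ordinal :=
  {ξ | ∃ q ≤ x, g q α ξ}

/-- The `κ` sets `forcedValues g x α` cover `λ`. -/
theorem exists_lt_card_forcedValues (hκ : ℵ₀ ≤ κ) (hκl : κ < l)
    (hgsurj : ∀ p : P, ∀ β < l.ord, ∃ q ≤ p, ∃ α < κ.ord, g q α β) (x : P) {ν : Cardinal.{1}}
    (hν : ν < lift.{1} l) : ∃ α < κ.ord, ν < #(forcedValues g x α) := by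
  by_contra! hsmall
  have hcover : Iio l.ord ⊆ ⋃ α ∈ Iio κ.ord, forcedValues g x α := fun β hβ => by
    obtain ⟨q, hq, α, hα, hg⟩ := hgsurj x β hβ
    exact mem_biUnion hα ⟨q, hq, hg⟩
  have hle : lift.{1} l ≤ lift.{1} κ * ν := calc
    lift.{1} l = #(Iio l.ord) := by rw [mk_Iio_ordinal, card_ord]
    _ ≤ #(⋃ α ∈ Iio κ.ord, forcedValues g x α) := mk_le_mk_of_subset hcover
    _ ≤ #(Iio κ.ord) * ⨆ α : Iio κ.ord, #(forcedValues g x α) := mk_biUnion_le _ _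
    _ ≤ lift.{1} κ * ν := by
      rw [mk_Iio_ordinal, card_ord]
      gcongr
      exact ciSup_le' fun α => hsmall α α.2
  exact hle.not_gt (mul_lt_of_lt (aleph0_le_lift.2 (hκ.trans hκl.le)) (lift_lt.2 hκl) hν)

variable (hgmono : ∀ {p q : P} {α β : Ordinal}, q ≤ p → g p α β → g q α β)
  (hgfun : ∀ p α β β', g p α β → g p α β' → β = β')
  (hgsurj : ∀ p : P, ∀ β < l.ord, ∃ q ≤ p, ∃ α < κ.ord, g q α β)
include hgmono hgfun hgsurj

theorem exists_antichain_lt_card (hκ : ℵ₀ ≤ κ) (hκl : κ < l) (x : P) {ν : Cardinal.{1}}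
    (hν : ν < lift.{1} l) : ∃ W ⊆ Iic x, IsAntichain Compat W ∧ ν < #W := by
  obtain ⟨α, -, hα⟩ := exists_lt_card_forcedValues hκ hκl hgsurj x hν
  obtain ⟨W, hWx, hW, hcard⟩ :=
    exists_antichain_card_forced (fun q ξ => g q α ξ) hgmono (fun p => hgfun p α) x
  exact ⟨W, hWx, hW, hα.trans_le hcard⟩

theorem exists_antichain_lift_le_card_of_lt_cof (hκ : ℵ₀ ≤ κ) (hκl : κ < l)
    (hcof : κ < l.ord.cof) (x : P) : ∃ W ⊆ Iic x, IsAntichain Compat W ∧ lift.{1} l ≤ #W := by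
  -- some single `ǧ(α)` takes `λ` values below `x`
  suffices ∃ α < κ.ord, lift.{1} l ≤ #(forcedValues g x α) by
    obtain ⟨α, -, hα⟩ := this
    obtain ⟨W, hWx, hW, hcard⟩ :=
      exists_antichain_card_forced (fun q ξ => g q α ξ) hgmono (fun p => hgfun p α) x
    exact ⟨W, hWx, hW, hα.trans hcard⟩
  by_contra! hsmall
  have hsup : ⨆ α : Iio κ.ord, #(forcedValues g x α) < lift.{1} l := by
    refine iSup_lt_of_lt_cof_ord ?_ fun α => hsmall α α.2
    rwa [mk_Iio_ordinal, card_ord, ← lift_ord, ← Ordinal.lift_cof, lift_lt]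
  obtain ⟨α, hα, hlt⟩ := exists_lt_card_forcedValues hκ hκl hgsurj x hsup
  exact hlt.not_ge (le_ciSup bddAbove_of_small (⟨α, hα⟩ : Iio κ.ord))

theorem exists_antichain_lift_le_card_of_cof_le (hκ : ℵ₀ ≤ κ) (hκl : κ < l)
    (hcof : l.ord.cof ≤ κ) (x : P) : ∃ W ⊆ Iic x, IsAntichain Compat W ∧ lift.{1} l ≤ #W := by
  -- glue antichains of sizes cofinal in `λ` below the members of an antichain of size `cf λ`
  obtain ⟨C, hC, hCcard⟩ := Order.exists_cof_eq (Iio l.ord)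
  obtain ⟨W₀, hW₀x, hW₀, hW₀card⟩ :=
    exists_antichain_lt_card (g := g) hgmono hgfun hgsurj hκ hκl x (lift_lt.2 hκl)
  obtain ⟨b⟩ : Nonempty (C ↪ W₀) := by
    refine Cardinal.le_def _ _ |>.1 (le_of_lt ?_)
    rw [hCcard, Ordinal.cof_Iio, ← Ordinal.lift_cof]
    exact (lift_le.2 hcof).trans_lt hW₀card
  have hW : ∀ c : C, ∃ W ⊆ Iic (b c : P), IsAntichain Compat W ∧ lift.{1} c.1.1.card < #W :=
    fun c => exists_antichain_lt_card (g := g) hgmono hgfun hgsurj hκ hκl _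
      (lift_lt.2 (lt_ord.1 c.1.2))
  choose W hWb hW hWcard using hW
  refine ⟨⋃ c, W c, iUnion_subset fun c => (hWb c).trans (Iic_subset_Iic.2 (hW₀x (b c).2)),
    isAntichain_iUnion_of_subset_Iic (fun c c' hcc' => hW₀ (b c).2 (b c').2
      (fun h => hcc' (b.injective (Subtype.ext h)))) hWb hW, le_of_forall_lt fun ν hν => ?_⟩
  obtain ⟨μ, hμ, rfl⟩ := lt_lift_iff.1 hν
  obtain ⟨c, hcC, hμc⟩ := hC ⟨μ.ord, ord_lt_ord.2 hμ⟩
  calc lift.{1} μ ≤ lift.{1} c.1.card := lift_le.2 (by simpa using Ordinal.card_le_card hμc)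
    _ < #(W ⟨c, hcC⟩) := hWcard _
    _ ≤ #(⋃ c, W c) := mk_le_mk_of_subset (subset_iUnion W _)

theorem exists_antichain_lift_le_card (hκ : ℵ₀ ≤ κ) (hκl : κ < l) (x : P) :
    ∃ W ⊆ Iic x, IsAntichain Compat W ∧ lift.{1} l ≤ #W := by
  rcases lt_or_ge κ l.ord.cof with hcof | hcof
  · exact exists_antichain_lift_le_card_of_lt_cof (g := g) hgmono hgfun hgsurj hκ hκl hcof x
  · exact exists_antichain_lift_le_card_of_cof_le (g := g) hgmono hgfun hgsurj hκ hκl hcof x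

end Name

section Partition

variable {P : Type 1} [Preorder P] {κ l : Cardinal.{0}} {g : P → Ordinal → Ordinal → Prop}

/-- `a` decides the value `ξ` of `ǧ(γ)`, and whether `enum ξ` belongs to the generic filter. -/
def Decides (g : P → Ordinal → Ordinal → Prop) (enum : Ordinal → P) (γ : Ordinal) (a : P) :
    Prop :=
  ∃ ξ, g a γ ξ ∧ (a ≤ enum ξ ∨ ¬Compat a (enum ξ))

variable (hgmono : ∀ {p q : P} {α β : Ordinal}, q ≤ p → g p α β → g q α β)
  (hgfun : ∀ p α β β', g p α β → g p α β' → β = β')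
  (hgsurj : ∀ p : P, ∀ β < l.ord, ∃ q ≤ p, ∃ α < κ.ord, g q α β)
include hgmono hgfun hgsurj

theorem exists_isPartition_decides (hκ : ℵ₀ ≤ κ) (hκl : κ < l) (hcard : #P = lift.{1} l)
    (hgtotal : ∀ p : P, ∀ α < κ.ord, ∃ q ≤ p, ∃ β < l.ord, g q α β) (enum : Ordinal → P)
    {S : Set P} (hS : S.Nonempty) (hSl : IsLowerSet S) {γ : Ordinal} (hγ : γ < κ.ord) :
    ∃ a, IsPartition l S a ∧ ∀ β, Decides g enum γ (a β) := by
  let D := {a ∈ S | Decides g enum γ a}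
  have hD : ∀ q ∈ S, ∃ a ≤ q, a ∈ D := by
    intro q hq
    obtain ⟨q', hq'q, ξ, -, hq'ξ⟩ := hgtotal q γ hγ
    by_cases hc : Compat q' (enum ξ)
    · obtain ⟨r, hrq', hrξ⟩ := hc
      exact ⟨r, hrq'.trans hq'q, hSl (hrq'.trans hq'q) hq, ξ, hgmono hrq' hq'ξ, .inl hrξ⟩
    · exact ⟨q', hq'q, hSl hq'q hq, ξ, hq'ξ, .inr hc⟩
  have hD' : ∀ w, ∃ a ≤ w, w ∈ S → a ∈ D := by
    intro w
    by_cases hw : w ∈ S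
    · obtain ⟨a, haw, ha⟩ := hD w hw
      exact ⟨a, haw, fun _ => ha⟩
    · exact ⟨w, le_rfl, fun h => absurd h hw⟩
  choose d hdw hdD using hD'
  obtain ⟨x, hx⟩ := hS
  obtain ⟨W, hWx, hW, hWcard⟩ :=
    exists_antichain_lift_le_card (g := g) hgmono hgfun hgsurj hκ hκl x
  have hWS : W ⊆ S := fun w hw => hSl (hWx hw) hx
  have hdW : #(d '' W) = #W := mk_image_eq_of_injOn d W fun w hw w' hw' h => by
    by_contra hne
    exact hW hw hw' hne ⟨d w, hdw w, h ▸ hdw w'⟩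
  obtain ⟨M, hdM, hMD, hM, hMmax⟩ := exists_maximal_antichain (D := D)
    (image_subset_iff.2 fun w hw => hdD w (hWS hw))
    (hW.image d fun w w' h => h.mono (hdw w) (hdw w'))
  have hMcard : #M = lift.{1} l := ((mk_set_le M).trans hcard.le).antisymm
    (hWcard.trans (hdW ▸ mk_le_mk_of_subset hdM))
  obtain ⟨a, haM, hainj, hMa⟩ :=
    exists_enum_of_mk_eq hMcard ((aleph0_pos.trans_le hκ).trans hκl).ne'
  refine ⟨a, ⟨fun β => (hMD (haM β)).1, fun β hβ β' hβ' hne =>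
    hM (haM β) (haM β') (hainj.ne hβ hβ' hne), fun q hq => ?_⟩, fun β => (hMD (haM β)).2⟩
  obtain ⟨a₀, ha₀q, ha₀D⟩ := hD q hq
  obtain ⟨m, hm, hcompat⟩ := hMmax a₀ ha₀D
  obtain ⟨β, hβ, rfl⟩ := hMa hm
  exact ⟨β, hβ, hcompat.mono ha₀q le_rfl⟩

theorem exists_node_subset_Iic {A : Set P → Ordinal → Ordinal → P} {enum : Ordinal → P}
    (hA : IsSplitting κ l A)
    (hdec : ∀ S : Set P, S.Nonempty → IsLowerSet S → ∀ γ < κ.ord, ∀ β,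
      Decides g enum γ (A S γ β))
    (hclosed : KClosed P κ) (hκ : ℵ₀ ≤ κ) (henum : ∀ p, ∃ ξ < l.ord, enum ξ = p) (p : P) :
    ∃ γ < κ.ord, ∃ s, MapsTo s (Iio γ) (Iio l.ord) ∧ node A s γ ⊆ Iic p := by
  obtain ⟨ξ, hξ, rfl⟩ := henum p
  obtain ⟨q, hqp, α, hα, hqξ⟩ := hgsurj _ ξ hξ
  have hα' : Order.succ α < κ.ord := (isSuccLimit_ord hκ).succ_lt hα
  obtain ⟨s, hs, y, hyq, hy⟩ := exists_mem_node hA hclosed hα' q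
  obtain ⟨hyα, hya⟩ := mem_node_succ.1 hy
  obtain ⟨ξ', hξ', hdecide⟩ := hdec _ ⟨y, hyα⟩ isLowerSet_node α hα (s α)
  obtain rfl : ξ' = ξ := hgfun y α _ _ (hgmono hya hξ') (hgmono hyq hqξ)
  refine ⟨Order.succ α, hα', s, hs, fun z hz => ?_⟩
  rcases hdecide with hle | hinc
  · exact (mem_node_succ.1 hz).2.trans hle
  · exact absurd ⟨y, hya, hyq.trans hqp⟩ hinc

end Partition

section Collapse

variable {κ l : Cardinal.{0}}

theorem Col.exists_lt_forall_fst_lt (hκ : κ.IsRegular) (f : Col κ l) :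
    ∃ γ < κ.ord, ∀ pr ∈ f.1, pr.1 < γ := by
  have hbdd : BddAbove (range fun pr : f.1 => pr.1.1 + 1) :=
    ⟨κ.ord, forall_mem_range.2 fun pr => Order.add_one_le_of_lt (f.2.1 _ pr.2).1⟩
  refine ⟨⨆ pr : f.1, pr.1.1 + 1, Ordinal.lift_iSup_add_one_lt_of_lt_cof ?_
    fun pr => (f.2.1 _ pr.2).1, fun pr hpr => ?_⟩
  · rw [lift_id'.{0, 1}, ← Ordinal.lift_cof, hκ.cof_ord]
    exact f.2.2.2
  · exact (Order.lt_add_one_iff.2 le_rfl).trans_le (le_ciSup hbdd ⟨pr, hpr⟩)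

theorem Col.compat_of_forall_eq (hκ : ℵ₀ ≤ κ) {f f' : Col κ l} (t : Ordinal → Ordinal)
    (ht : ∀ pr ∈ f.1 ∪ f'.1, t pr.1 = pr.2) : Compat f f' := by
  refine ⟨⟨f.1 ∪ f'.1, fun pr hpr => ?_, fun pr hpr qr hqr h => ?_, ?_⟩,
    subset_union_left, subset_union_right⟩
  · rcases hpr with hpr | hpr
    exacts [f.2.1 pr hpr, f'.2.1 pr hpr]
  · rw [← ht pr hpr, ← ht qr hqr, h]
  · exact (mk_union_le _ _).trans_lt (add_lt_of_lt (aleph0_le_lift.2 hκ) f.2.2.2 f'.2.2.2)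

def Col.restrict {γ : Ordinal} (s : Ordinal → Ordinal) (hγ : γ < κ.ord)
    (hs : MapsTo s (Iio γ) (Iio l.ord)) : Col κ l :=
  ⟨(fun δ => (δ, s δ)) '' Iio γ, by
    rintro _ ⟨δ, hδ, rfl⟩
    exact ⟨lt_trans hδ hγ, hs hδ⟩, by
    rintro _ ⟨δ, -, rfl⟩ _ ⟨δ', -, rfl⟩ (rfl : δ = δ')
    rfl,
    mk_image_le.trans_lt (by rw [mk_Iio_ordinal, lift_lt]; exact lt_ord.1 hγ)⟩

open Classical in
/-- `f` extended by `0` off its domain. -/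
noncomputable def Col.toFun (f : Col κ l) (δ : Ordinal) : Ordinal :=
  if h : ∃ β, (δ, β) ∈ f.1 then h.choose else 0

theorem Col.toFun_eq (f : Col κ l) {pr : Ordinal × Ordinal} (h : pr ∈ f.1) :
    Col.toFun f pr.1 = pr.2 := by
  have hex : ∃ β, (pr.1, β) ∈ f.1 := ⟨pr.2, h⟩
  rw [Col.toFun, dif_pos hex]
  exact f.2.2.1 _ hex.choose_spec pr h rfl

theorem Col.toFun_lt (f : Col κ l) (hl : l ≠ 0) (δ : Ordinal) : Col.toFun f δ < l.ord := by
  unfold Col.toFun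
  split_ifs with h
  · exact (f.2.1 _ h.choose_spec).2
  · exact ord_pos.2 (pos_iff_ne_zero.2 hl)

variable {P : Type 1} [Preorder P] {A : Set P → Ordinal → Ordinal → P}

def nodesExtending (A : Set P → Ordinal → Ordinal → P) (f : Col κ l) : Set P :=
  {x | ∃ γ < κ.ord, ∃ s, MapsTo s (Iio γ) (Iio l.ord) ∧ (∀ pr ∈ f.1, pr.1 < γ ∧ s pr.1 = pr.2) ∧
    x ∈ node A s γ}

theorem isLowerSet_nodesExtending (f : Col κ l) : IsLowerSet (nodesExtending A f) :=
  fun _ _ hyx ⟨γ, hγ, s, hs, hf, hx⟩ => ⟨γ, hγ, s, hs, hf, isLowerSet_node hyx hx⟩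

theorem monotone_nodesExtending : Monotone (nodesExtending A : Col κ l → Set P) :=
  fun _ _ hff' _ ⟨γ, hγ, s, hs, hf, hx⟩ => ⟨γ, hγ, s, hs, fun pr hpr => hf pr (hff' hpr), hx⟩

theorem nodesExtending_nonempty (hκ : κ.IsRegular) (hl : l ≠ 0) (hA : IsSplitting κ l A)
    (hclosed : KClosed P κ) (f : Col κ l) : (nodesExtending A f).Nonempty := by
  obtain ⟨γ, hγ, hf⟩ := Col.exists_lt_forall_fst_lt hκ f
  obtain ⟨x, hx⟩ := node_nonempty hA hclosed (Col.toFun f) hγ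
  exact ⟨x, γ, hγ, Col.toFun f, fun δ _ => Col.toFun_lt f hl δ,
    fun pr hpr => ⟨hf pr hpr, Col.toFun_eq f hpr⟩, hx⟩

theorem compat_of_nodesExtending (hκ : ℵ₀ ≤ κ) (hA : IsSplitting κ l A) {f f' : Col κ l}
    (h : (nodesExtending A f ∩ nodesExtending A f').Nonempty) : Compat f f' := by
  obtain ⟨x, ⟨γ, hγ, s, hs, hf, hx⟩, ⟨γ', hγ', s', hs', hf', hx'⟩⟩ := h
  have hss' : EqOn s s' (Iio (min γ γ')) := eqOn_of_mem_node hA (min_lt_of_left_lt hγ)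
    (hs.mono_left (Iio_subset_Iio (min_le_left _ _)))
    (hs'.mono_left (Iio_subset_Iio (min_le_right _ _)))
    (node_anti (min_le_left _ _) hx) (node_anti (min_le_right _ _) hx')
  classical
  refine Col.compat_of_forall_eq hκ (fun δ => if δ < γ then s δ else s' δ) ?_
  rintro pr (hpr | hpr)
  · simp only [if_pos (hf pr hpr).1, (hf pr hpr).2]
  · split_ifs with hlt
    · rw [hss' (lt_min hlt (hf' pr hpr).1), (hf' pr hpr).2]
    · exact (hf' pr hpr).2

theorem nodesExtending_restrict_subset {γ : Ordinal} {s : Ordinal → Ordinal} (hγ : γ < κ.ord)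
    (hs : MapsTo s (Iio γ) (Iio l.ord)) : nodesExtending A (Col.restrict s hγ hs) ⊆ node A s γ := by
  rintro x ⟨γ', -, s', -, hs', hx⟩
  have hextends : ∀ δ < γ, δ < γ' ∧ s' δ = s δ := fun δ hδ => hs' _ ⟨δ, hδ, rfl⟩
  rw [node_congr fun δ hδ => (hextends δ hδ).2.symm]
  exact node_anti (le_of_forall_lt fun δ hδ => (hextends δ hδ).1) hx

end Collapse

end CollapseAbsorption

open CollapseAbsorption in
theorem collapse_absorption_general
    (κ l : Cardinal.{0}) (hκ : κ.IsRegular) (hκl : κ < l)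
    (P : Type 1) [Preorder P]
    (hcard : Cardinal.mk P = Cardinal.lift.{1} l)
    (hsep : Separative P) (hclosed : KClosed P κ)
    (g : P → Ordinal → Ordinal → Prop)
    (hgmono : ∀ {p q : P} {α β : Ordinal}, q ≤ p → g p α β → g q α β)
    (hgfun : ∀ p α β β', g p α β → g p α β' → β = β')
    (hgtotal : ∀ p : P, ∀ α < κ.ord, ∃ q ≤ p, ∃ β < l.ord, g q α β)
    (hgsurj : ∀ p : P, ∀ β < l.ord, ∃ q ≤ p, ∃ α < κ.ord, g q α β) :
    ForcingEquiv P (Col κ l) := by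
  have hl : l ≠ 0 := (hκ.pos.trans hκl).ne'
  obtain ⟨enum, -, -, henum⟩ :=
    exists_enum_of_mk_eq (M := (univ : Set P)) (by rw [mk_univ, hcard]) hl
  have : Nonempty P := ⟨enum 0⟩
  choose! A hA hdec using fun (S : Set P) (hS : S.Nonempty) (hSl : IsLowerSet S) γ
    (hγ : γ < κ.ord) => exists_isPartition_decides (g := g) hgmono hgfun hgsurj hκ.aleph0_le hκl
      hcard hgtotal enum hS hSl hγ
  refine forcingEquiv_of_lowerSets hsep (nodesExtending A) isLowerSet_nodesExtending
    (nodesExtending_nonempty hκ hl hA hclosed) monotone_nodesExtending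
    (fun _ _ => compat_of_nodesExtending hκ.aleph0_le hA) fun p => ?_
  obtain ⟨γ, hγ, s, hs, hsub⟩ := exists_node_subset_Iic (g := g) hgmono hgfun hgsurj hA hdec
    hclosed hκ.aleph0_le (fun p => henum (mem_univ p)) p
  exact ⟨Col.restrict s hγ hs, (nodesExtending_restrict_subset hγ hs).trans hsub⟩

/-- Suppose `κ` is regular, `κ < λ`, and `ℙ` is a separative atomless `κ`-closed poset of
cardinality `λ` which forces the existence of a surjection from `κ` onto `λ` (witnessed by a
name `ǧ`, given by the relation `g q α β` = "`q ⊩ ǧ(α̌) = β̌`", forced to be a surjection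
`κ → λ`).  Then `ro(ℙ) ≅ ro(Col(κ,{λ}))`, i.e. `ℙ` is forcing equivalent to the poset of
partial functions from `κ` to `λ` of size `< κ`. -/
theorem collapse_absorption
    (κ l : Cardinal.{0}) (hκ : κ.IsRegular) (hκl : κ < l)
    (P : Type 1) [Preorder P]
    (hcard : Cardinal.mk P = Cardinal.lift.{1} l)
    (hsep : Separative P) (hatom : Atomless P) (hclosed : KClosed P κ)
    (g : P → Ordinal → Ordinal → Prop)
    (hgmono : ∀ {p q : P} {α β : Ordinal}, q ≤ p → g p α β → g q α β)
    (hgfun : ∀ p α β β', g p α β → g p α β' → β = β')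
    (hgbound : ∀ p α β, g p α β → α < κ.ord ∧ β < l.ord)
    (hgtotal : ∀ p : P, ∀ α < κ.ord, ∃ q ≤ p, ∃ β < l.ord, g q α β)
    (hgsurj : ∀ p : P, ∀ β < l.ord, ∃ q ≤ p, ∃ α < κ.ord, g q α β) :
    ForcingEquiv P (Col κ l) :=
  collapse_absorption_general κ l hκ hκl P hcard hsep hclosed g hgmono hgfun hgtotal hgsurj
end
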